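/- Define A(h) = Σ_{i=h}^{m-1} y_{i+1}·A_{i-h}^i and B(h) = Σ_{i=h}^{m} C(i,h)·y_i − (−1)^h·y_h for a vector (y_0,…,y_m) in a commutative ring k. Then 2·A(h) − A(h+1) = (−1)^h · B(h+1) for all h = 0, …, m−1. -/

import Mathlib

/-!
Split off the `i = h` term of `A h` and shift `B (h + 1)` down by one index. Both sides are then
sums over `h < i < m` of multiples of `y (i + 1)`, plus a multiple of `y (h + 1)`. The coefficients
of `y (i + 1)` agree by the identity `2 A_{i-h}^i - A_{i-h-1}^i = (-1)^h C(i+1, h+1)`, proved by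
induction on `h` from Pascal's rule; the coefficients of `y (h + 1)` agree because
`2 A_0^h = 1 + (-1)^h`.
-/

/-- `A n N = ∑_{k=0}^{N-n} (-1)^k * C(n+k, n)` as an integer. -/
def altBinomSum (n N : ℕ) : ℤ :=
  ∑ k ∈ Finset.range (N - n + 1), (-1 : ℤ) ^ k * ((n + k).choose n : ℤ)

lemma altBinomSum_self (n : ℕ) : altBinomSum n n = 1 := by
  simp [altBinomSum]

lemma altBinomSum_add_succ (n d : ℕ) :
    altBinomSum n (n + (d + 1)) =
      altBinomSum n (n + d) + (-1) ^ (d + 1) * ((n + (d + 1)).choose n : ℤ) := by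
  simp only [altBinomSum, Nat.add_sub_cancel_left]
  exact Finset.sum_range_succ _ (d + 1)

lemma two_mul_altBinomSum_zero (N : ℕ) : 2 * altBinomSum 0 N = 1 + (-1) ^ N := by
  induction N with
  | zero => simp [altBinomSum_self]
  | succ N ih =>
    have step := altBinomSum_add_succ 0 N
    simp only [zero_add, Nat.choose_zero_right, Nat.cast_one, mul_one] at step
    rw [step, pow_succ]
    linear_combination ih

lemma two_mul_altBinomSum_succ_sub (n d : ℕ) :
    2 * altBinomSum (n + 1) (n + 1 + d) - altBinomSum n (n + 1 + d) =
      (-1) ^ d * ((n + d + 2).choose (n + 1) : ℤ) := by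
  induction d with
  | zero =>
    have h1 := altBinomSum_add_succ n 0
    simp only [add_zero, zero_add, altBinomSum_self, Nat.choose_succ_self_right] at h1 ⊢
    rw [h1]
    push_cast
    ring
  | succ d ih =>
    rw [altBinomSum_add_succ, show n + 1 + (d + 1) = n + (d + 1 + 1) by ring,
      altBinomSum_add_succ, show n + (d + 1) + 2 = n + d + 2 + 1 by ring, Nat.choose_succ_succ,
      show n + (d + 1 + 1) = n + d + 2 by ring, show n + (d + 1) = n + 1 + d by ring]
    push_cast
    linear_combination ih

lemma two_mul_altBinomSum_sub {h i : ℕ} (hi : h < i) :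
    2 * altBinomSum (i - h) i - altBinomSum (i - (h + 1)) i =
      (-1) ^ h * ((i + 1).choose (h + 1) : ℤ) := by
  obtain ⟨n, rfl⟩ : ∃ n, i = n + 1 + h := ⟨i - h - 1, by omega⟩
  rw [show n + 1 + h - h = n + 1 by omega, show n + 1 + h - (h + 1) = n by omega,
    two_mul_altBinomSum_succ_sub, show n + 1 + h + 1 = n + h + 2 by ring,
    Nat.choose_symm_of_eq_add (show n + h + 2 = n + 1 + (h + 1) by ring)]

lemma two_mul_altBinomSum_smul_sub {R : Type*} [CommRing R] {h i : ℕ} (hi : h < i) (x : R) :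
    2 * (altBinomSum (i - h) i • x) - altBinomSum (i - (h + 1)) i • x =
      (-1) ^ h * (((i + 1).choose (h + 1) : R) * x) := by
  have hcast := congrArg (Int.cast : ℤ → R) (two_mul_altBinomSum_sub hi)
  push_cast at hcast
  simp only [zsmul_eq_mul]
  linear_combination x * hcast

theorem stmt4 (k : Type*) [CommRing k] (m : ℕ) (hm : 1 ≤ m) (y : ℕ → k)
    (A B : ℕ → k)
    (hA : ∀ h : ℕ, A h = ∑ i ∈ Finset.Icc h (m - 1), altBinomSum (i - h) i • y (i + 1))
    (hB : ∀ h : ℕ, B h = ∑ i ∈ Finset.Icc h m, (i.choose h : k) * y i - (-1 : k) ^ h * y h) :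
    ∀ h : ℕ, h ≤ m - 1 → 2 * A h - A (h + 1) = (-1 : k) ^ h * B (h + 1) := by
  intro h hh
  have hhm : h < m := by omega
  have hIcc : ∀ j, Finset.Icc j (m - 1) = Finset.Ico j m := fun j => by ext; simp; omega
  have hB' : ∑ i ∈ Finset.Icc (h + 1) m, (i.choose (h + 1) : k) * y i =
      ∑ i ∈ Finset.Ico h m, ((i + 1).choose (h + 1) : k) * y (i + 1) := by
    rw [Finset.sum_Ico_add' (fun i => (i.choose (h + 1) : k) * y i),
      Finset.Ico_add_one_right_eq_Icc]
  rw [hA, hA, hB, hB', hIcc, hIcc, Finset.sum_eq_sum_Ico_succ_bot hhm,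
    Finset.sum_eq_sum_Ico_succ_bot hhm, Nat.sub_self, Nat.choose_self, Nat.cast_one, zsmul_eq_mul]
  have hbottom := congrArg (Int.cast : ℤ → k) (two_mul_altBinomSum_zero h)
  push_cast at hbottom
  have hsq : (-1 : k) ^ (2 * h) = 1 := by rw [pow_mul]; simp
  have hsum := Finset.sum_congr (rfl : Finset.Ico (h + 1) m = _) fun i hi =>
    two_mul_altBinomSum_smul_sub (Finset.mem_Ico.mp hi).1 (y (i + 1))
  rw [Finset.sum_sub_distrib, ← Finset.mul_sum, ← Finset.mul_sum] at hsum
  linear_combination hsum + y (h + 1) * hbottom - y (h + 1) * hsq
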